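/- arXiv:2110.15125 — 2 statements merged into one kernel-verified Lean document; each statement's English description precedes it below -/
import Mathlib

section
/- Under the hypotheses of the previous statement, the scheme B (yⁿ⁺¹ - yⁿ)/τ + A yⁿ⁺ᶿ = φⁿ with y⁰ = v₀ satisfies ‖yⁿ⁺¹‖_B ≤ ‖v₀‖_B + Σ_{k=0}^{n} τ ‖φᵏ‖_{B⁻¹} for all n. -/
/-!
Testing the scheme against `yⁿ⁺ᶿ` and using `yⁿ⁺ᶿ = (yⁿ⁺¹ + yⁿ)/2 + (σ - 1/2)(yⁿ⁺¹ - yⁿ)` gives the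
energy inequality
`‖yⁿ⁺¹‖²_B - ‖yⁿ‖²_B ≤ τ‖φⁿ‖_{B⁻¹} (‖yⁿ⁺¹‖_B + ‖yⁿ‖_B) + 2(σ - 1/2) ‖d‖_B (τ‖φⁿ‖_{B⁻¹} - ‖d‖_B)`
with `d = yⁿ⁺¹ - yⁿ`. If `‖d‖_B ≤ τ‖φⁿ‖_{B⁻¹}` the one-step bound
`‖yⁿ⁺¹‖_B ≤ ‖yⁿ‖_B + τ‖φⁿ‖_{B⁻¹}` is the triangle inequality; otherwise the last term is
nonpositive and the bound follows by dividing by `‖yⁿ⁺¹‖_B + ‖yⁿ‖_B`. Summing the one-step bounds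
gives the estimate.
-/

open scoped RealInnerProductSpace BigOperators

namespace LinearMap

variable {E : Type*} [NormedAddCommGroup E] [InnerProductSpace ℝ E]

/-- The paper's `‖x‖_T`; its `‖φ‖_{B⁻¹}` is `Binv.energyNorm φ`. -/
noncomputable def energyNorm (T : E →ₗ[ℝ] E) (x : E) : ℝ := √⟪T x, x⟫

lemma energyNorm_nonneg (T : E →ₗ[ℝ] E) (x : E) : 0 ≤ T.energyNorm x := Real.sqrt_nonneg _

variable {T : E →ₗ[ℝ] E}

lemma IsPositive.sq_energyNorm (hT : T.IsPositive) (x : E) : T.energyNorm x ^ 2 = ⟪T x, x⟫ :=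
  Real.sq_sqrt (hT.inner_nonneg_left x)

lemma IsPositive.inner_sq_le (hT : T.IsPositive) (x z : E) :
    ⟪T x, z⟫ ^ 2 ≤ ⟪T x, x⟫ * ⟪T z, z⟫ := by
  have hdiscrim : discrim ⟪T z, z⟫ (2 * ⟪T x, z⟫) ⟪T x, x⟫ ≤ 0 := by
    refine discrim_le_zero fun t => ?_
    have hsymm : ⟪T z, x⟫ = ⟪T x, z⟫ := by rw [hT.isSymmetric, real_inner_comm]
    have := hT.inner_nonneg_left (x + t • z)
    simp only [map_add, map_smul, inner_add_left, inner_add_right, real_inner_smul_left,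
      real_inner_smul_right, hsymm] at this
    linarith
  rw [discrim] at hdiscrim
  linarith

lemma IsPositive.inner_le_energyNorm_mul (hT : T.IsPositive) (x z : E) :
    ⟪T x, z⟫ ≤ T.energyNorm x * T.energyNorm z := by
  rw [energyNorm, energyNorm, ← Real.sqrt_mul (hT.inner_nonneg_left x)]
  exact (le_abs_self _).trans (Real.abs_le_sqrt (hT.inner_sq_le x z))

lemma IsPositive.energyNorm_add_le (hT : T.IsPositive) (x z : E) :
    T.energyNorm (x + z) ≤ T.energyNorm x + T.energyNorm z := by
  refine Real.sqrt_le_iff.2 ⟨by positivity [T.energyNorm_nonneg x, T.energyNorm_nonneg z], ?_⟩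
  have hsymm : ⟪T z, x⟫ = ⟪T x, z⟫ := by rw [hT.isSymmetric, real_inner_comm]
  have hexpand : ⟪T (x + z), x + z⟫ = ⟪T x, x⟫ + 2 * ⟪T x, z⟫ + ⟪T z, z⟫ := by
    simp only [map_add, inner_add_left, inner_add_right, hsymm]
    ring
  rw [hexpand, ← hT.sq_energyNorm x, ← hT.sq_energyNorm z]
  nlinarith [hT.inner_le_energyNorm_mul x z]

lemma IsPositive.inner_le_energyNorm_rightInverse_mul (hT : T.IsPositive) {S : E →ₗ[ℝ] E}
    (hS : ∀ x, T (S x) = x) (φ z : E) : ⟪φ, z⟫ ≤ S.energyNorm φ * T.energyNorm z := by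
  have hSφ : T.energyNorm (S φ) = S.energyNorm φ := by
    rw [energyNorm, energyNorm, hS, real_inner_comm]
  simpa only [hS, hSφ] using hT.inner_le_energyNorm_mul (S φ) z

lemma IsSymmetric.inner_map_sub_smul_add_smul (hT : T.IsSymmetric) (u v : E) (σ : ℝ) :
    ⟪T (u - v), σ • u + (1 - σ) • v⟫
      = (⟪T u, u⟫ - ⟪T v, v⟫) / 2 + (σ - 1 / 2) * ⟪T (u - v), u - v⟫ := by
  have hsymm : ⟪T v, u⟫ = ⟪T u, v⟫ := by rw [hT, real_inner_comm]
  simp only [map_sub, inner_sub_left, inner_sub_right, inner_add_right, real_inner_smul_right,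
    hsymm]
  ring

end LinearMap

lemma le_add_of_sq_sub_sq_le {a b c d s : ℝ} (hb : 0 ≤ b) (hc : 0 ≤ c) (hs : 0 ≤ s)
    (htri : a ≤ b + d) (h : a ^ 2 - b ^ 2 ≤ c * (a + b) + 2 * s * d * (c - d)) : a ≤ b + c := by
  rcases le_total d c with hdc | hcd
  · linarith
  · have hcorr : 2 * s * d * (c - d) ≤ 0 :=
      mul_nonpos_of_nonneg_of_nonpos (by positivity [hc.trans hcd]) (by linarith)
    nlinarith

lemma le_add_sum_of_succ_le_add {a g : ℕ → ℝ} (h : ∀ n, a (n + 1) ≤ a n + g n) (n : ℕ) :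
    a n ≤ a 0 + ∑ k ∈ Finset.range n, g k := by
  have := Finset.sum_le_sum fun k (_ : k ∈ Finset.range n) => sub_le_iff_le_add'.2 (h k)
  rw [Finset.sum_range_sub] at this
  linarith

lemma energyNorm_le_of_theta_scheme {E : Type*} [NormedAddCommGroup E] [InnerProductSpace ℝ E]
    {B Binv A : E →ₗ[ℝ] E} (hB : B.IsPositive) (hBinv : ∀ x, B (Binv x) = x)
    (hA : ∀ x, 0 ≤ ⟪A x, x⟫) {τ σ : ℝ} (hτ : 0 < τ) (hσ : 1 / 2 ≤ σ) {u v φ : E}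
    (hscheme : τ⁻¹ • B (u - v) + A (σ • u + (1 - σ) • v) = φ) :
    B.energyNorm u ≤ B.energyNorm v + τ * Binv.energyNorm φ := by
  set w := σ • u + (1 - σ) • v
  have hBd : B (u - v) = τ • (φ - A w) := by
    rw [← hscheme, add_sub_cancel_right, smul_inv_smul₀ hτ.ne']
  have hφw : ⟪φ, w⟫ = (⟪φ, u⟫ + ⟪φ, v⟫) / 2 + (σ - 1 / 2) * ⟪φ, u - v⟫ := by
    simp only [w, inner_add_right, inner_sub_right, real_inner_smul_right]
    ring
  have henergy : ⟪B (u - v), w⟫ = _ := hB.isSymmetric.inner_map_sub_smul_add_smul u v σ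
  rw [← hB.sq_energyNorm u, ← hB.sq_energyNorm v, ← hB.sq_energyNorm (u - v), hBd,
    real_inner_smul_left, inner_sub_left, hφw] at henergy
  have hdual := hB.inner_le_energyNorm_rightInverse_mul hBinv φ
  refine le_add_of_sq_sub_sq_le (B.energyNorm_nonneg v)
    (mul_nonneg hτ.le (Binv.energyNorm_nonneg φ)) (sub_nonneg.2 hσ) (d := B.energyNorm (u - v))
    (by simpa using hB.energyNorm_add_le v (u - v)) ?_
  nlinarith [mul_le_mul_of_nonneg_left (hdual u) hτ.le, mul_le_mul_of_nonneg_left (hdual v) hτ.le,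
    mul_le_mul_of_nonneg_left (hdual (u - v)) (mul_nonneg hτ.le (sub_nonneg.2 hσ)),
    mul_nonneg hτ.le (hA w)]

theorem stmt_5_general {H : Type*} [NormedAddCommGroup H] [InnerProductSpace ℝ H]
    (B Binv A : H →ₗ[ℝ] H)
    (hB_sym : ∀ x y : H, ⟪B x, y⟫ = ⟪x, B y⟫)
    (hB_pos : ∀ x : H, x ≠ 0 → 0 < ⟪B x, x⟫)
    (hBinv : ∀ x : H, Binv (B x) = x ∧ B (Binv x) = x)
    (hA_nonneg : ∀ x : H, 0 ≤ ⟪A x, x⟫)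
    (τ σ : ℝ) (hτ : 0 < τ) (hσ : 1 / 2 ≤ σ)
    (y φ : ℕ → H) (v₀ : H) (hy0 : y 0 = v₀)
    (hscheme : ∀ n : ℕ,
      τ⁻¹ • B (y (n + 1) - y n) + A (σ • y (n + 1) + (1 - σ) • y n) = φ n) :
    ∀ n : ℕ,
      Real.sqrt ⟪B (y (n + 1)), y (n + 1)⟫
        ≤ Real.sqrt ⟪B v₀, v₀⟫
          + ∑ k ∈ Finset.range (n + 1), τ * Real.sqrt ⟪Binv (φ k), φ k⟫ := by
  have hB : B.IsPositive := (LinearMap.isPositive_iff B).2 ⟨hB_sym, fun x => by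
    rcases eq_or_ne x 0 with rfl | hx
    · simp
    · exact (hB_pos x hx).le⟩
  have hstep (n : ℕ) := energyNorm_le_of_theta_scheme hB (fun x => (hBinv x).2) hA_nonneg hτ hσ
    (hscheme n)
  intro n
  simpa only [LinearMap.energyNorm, hy0] using le_add_sum_of_succ_le_add (a := fun n => B.energyNorm (y n)) hstep (n + 1)

theorem stmt_5 {H : Type*} [NormedAddCommGroup H] [InnerProductSpace ℝ H]
    [FiniteDimensional ℝ H]
    (B Binv A : H →ₗ[ℝ] H)
    (hB_sym : ∀ x y : H, ⟪B x, y⟫ = ⟪x, B y⟫)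
    (hB_pos : ∀ x : H, x ≠ 0 → 0 < ⟪B x, x⟫)
    (hBinv : ∀ x : H, Binv (B x) = x ∧ B (Binv x) = x)
    (hA_nonneg : ∀ x : H, 0 ≤ ⟪A x, x⟫)
    (τ σ : ℝ) (hτ : 0 < τ) (hσ : 1 / 2 ≤ σ)
    (y φ : ℕ → H) (v₀ : H) (hy0 : y 0 = v₀)
    (hscheme : ∀ n : ℕ,
      τ⁻¹ • B (y (n + 1) - y n) + A (σ • y (n + 1) + (1 - σ) • y n) = φ n) :
    ∀ n : ℕ,
      Real.sqrt ⟪B (y (n + 1)), y (n + 1)⟫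
        ≤ Real.sqrt ⟪B v₀, v₀⟫
          + ∑ k ∈ Finset.range (n + 1), τ * Real.sqrt ⟪Binv (φ k), φ k⟫ :=
  stmt_5_general B Binv A hB_sym hB_pos hBinv hA_nonneg τ σ hτ hσ y φ v₀ hy0 hscheme
end

section
/- Let H be a finite-dimensional real inner product space, B = B* ≥ δ I with δ > 0, C with ⟪Cx,x⟫ ≥ 0, A = A* with ⟪Ax,x⟫ ≥ 0, a_i > 0, b_i ≥ 0. If (v, v₁,…,v_m) is a C¹ solution of B dv/dt + Σ_i a_i A v_i + C v = φ(t), dv_i/dt + b_i v_i − v = 0, with v(0) = u₀, v_i(0) = 0, then (‖v(t)‖_B² + Σ_i a_i ‖v_i(t)‖_A²)^{1/2} ≤ ‖u₀‖_B + ∫_0^t ‖φ(s)‖_{B⁻¹} ds for all t ≥ 0. -/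
open scoped RealInnerProductSpace

/-!
Along the solution the energy `E = ‖v‖_B² + ∑ aᵢ ‖vᵢ‖_A²` satisfies
`E' = 2⟪φ, v⟫ - 2⟪C v, v⟫ - 2 ∑ aᵢ bᵢ ‖vᵢ‖_A² ≤ 2⟪φ, v⟫ ≤ 2 ‖φ‖_{B⁻¹} ‖v‖_B ≤ 2 ‖φ‖_{B⁻¹} √E`,
the coupling terms `aᵢ⟪A vᵢ, v⟫` cancelling between the two equations. Formally this says
`(√E)' ≤ ‖φ‖_{B⁻¹}`; since `√E` need not be differentiable where `E = 0`, one integrates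
`(√(E + ε))' ≤ ‖φ‖_{B⁻¹}` instead and lets `ε → 0`.
-/

section SqrtComparison

variable {E E' ψ : ℝ → ℝ}

theorem sqrt_add_le_sqrt_add_add_integral_of_deriv_le (hψ : Continuous ψ) (hψ₀ : ∀ s, 0 ≤ ψ s)
    (hE₀ : ∀ s, 0 ≤ s → 0 ≤ E s) (hE : ∀ s, 0 ≤ s → HasDerivAt E (E' s) s)
    (hE' : ∀ s, 0 ≤ s → E' s ≤ 2 * ψ s * √(E s)) {ε : ℝ} (hε : 0 < ε) {t : ℝ} (ht : 0 ≤ t) :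
    √(E t + ε) ≤ √(E 0 + ε) + ∫ s in (0 : ℝ)..t, ψ s := by
  set g : ℝ → ℝ := fun s => (∫ x in (0 : ℝ)..s, ψ x) - √(E s + ε)
  have hpos : ∀ s, 0 ≤ s → 0 < E s + ε := fun s hs => by linarith [hE₀ s hs]
  have hg : ∀ s, 0 ≤ s → HasDerivAt g (ψ s - E' s / (2 * √(E s + ε))) s := fun s hs =>
    (hψ.integral_hasStrictDerivAt 0 s).hasDerivAt.sub
      (((hE s hs).add_const ε).sqrt (hpos s hs).ne')
  have hg' : ∀ s, 0 ≤ s → 0 ≤ ψ s - E' s / (2 * √(E s + ε)) := by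
    intro s hs
    have hψs := hψ₀ s
    rw [sub_nonneg, div_le_iff₀ (mul_pos two_pos (Real.sqrt_pos.2 (hpos s hs)))]
    calc E' s ≤ 2 * ψ s * √(E s) := hE' s hs
      _ ≤ 2 * ψ s * √(E s + ε) := by gcongr; linarith
      _ = ψ s * (2 * √(E s + ε)) := by ring
  have hmono : MonotoneOn g (Set.Ici 0) := by
    refine monotoneOn_of_hasDerivWithinAt_nonneg (f' := fun s => ψ s - E' s / (2 * √(E s + ε)))
      (convex_Ici 0)
      (fun s hs => (hg s hs).continuousAt.continuousWithinAt) (fun s hs => ?_) (fun s hs => ?_)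
    all_goals rw [interior_Ici] at hs
    · exact (hg s (le_of_lt hs)).hasDerivWithinAt
    · exact hg' s (le_of_lt hs)
  have hg0t := hmono Set.self_mem_Ici ht ht
  simp only [g, intervalIntegral.integral_same] at hg0t
  linarith

theorem sqrt_le_sqrt_add_integral_of_deriv_le (hψ : Continuous ψ) (hψ₀ : ∀ s, 0 ≤ ψ s)
    (hE₀ : ∀ s, 0 ≤ s → 0 ≤ E s) (hE : ∀ s, 0 ≤ s → HasDerivAt E (E' s) s)
    (hE' : ∀ s, 0 ≤ s → E' s ≤ 2 * ψ s * √(E s)) {t : ℝ} (ht : 0 ≤ t) :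
    √(E t) ≤ √(E 0) + ∫ s in (0 : ℝ)..t, ψ s := by
  have hlim : ∀ c : ℝ, Filter.Tendsto (fun ε => √(c + ε)) (nhdsWithin 0 (Set.Ioi 0)) (nhds √c) :=
    fun c => by
      simpa using ((continuous_const.add continuous_id).sqrt.tendsto' 0 √c (by simp)).mono_left
        nhdsWithin_le_nhds
  exact le_of_tendsto_of_tendsto (hlim (E t)) ((hlim (E 0)).add_const _)
    (eventually_nhdsWithin_of_forall fun ε hε =>
      sqrt_add_le_sqrt_add_add_integral_of_deriv_le hψ hψ₀ hE₀ hE hE' hε ht)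

end SqrtComparison

section InnerProduct

variable {H : Type*} [NormedAddCommGroup H] [InnerProductSpace ℝ H]

theorem LinearMap.IsPositive.inner_le_sqrt_mul_sqrt {T : H →ₗ[ℝ] H} (hT : T.IsPositive)
    (x y : H) : ⟪T x, y⟫ ≤ √⟪T x, x⟫ * √⟪T y, y⟫ := by
  have hcs := LinearMap.BilinForm.apply_mul_apply_le_of_forall_zero_le ((innerₗ H).comp T)
    hT.inner_nonneg_left x y
  have hsymm : ⟪T y, x⟫ = ⟪T x, y⟫ := by rw [hT.isSymmetric, real_inner_comm]
  rw [← Real.sqrt_mul (hT.inner_nonneg_left x)]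
  apply Real.le_sqrt_of_sq_le
  simpa [sq, hsymm] using hcs

theorem inner_le_sqrt_inner_inv_mul_sqrt {B Binv : H →ₗ[ℝ] H} (hB : B.IsPositive)
    (hBinv : ∀ x, B (Binv x) = x) (x y : H) : ⟪x, y⟫ ≤ √⟪Binv x, x⟫ * √⟪B y, y⟫ := by
  have h := hB.inner_le_sqrt_mul_sqrt (Binv x) y
  rwa [hBinv, real_inner_comm (Binv x) x] at h

theorem LinearMap.IsSymmetric.hasDerivAt_inner_apply_self [FiniteDimensional ℝ H]
    {T : H →ₗ[ℝ] H} (hT : T.IsSymmetric) {u : ℝ → H} {u' : H} {t : ℝ}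
    (hu : HasDerivAt u u' t) : HasDerivAt (fun s => ⟪T (u s), u s⟫) (2 * ⟪T (u t), u'⟫) t := by
  have hTu : HasDerivAt (fun s => T (u s)) (T u') t :=
    T.toContinuousLinearMap.hasFDerivAt.comp_hasDerivAt t hu
  refine (hTu.inner ℝ hu).congr_deriv ?_
  rw [hT, real_inner_comm]
  ring

section Energy

variable {ι : Type*} [Fintype ι] {A B C : H →ₗ[ℝ] H} {a b : ι → ℝ}

def energy (B A : H →ₗ[ℝ] H) (a : ι → ℝ) (u : H) (w : ι → H) : ℝ :=
  ⟪B u, u⟫ + ∑ i, a i * ⟪A (w i), w i⟫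

theorem inner_le_energy (hA : A.IsPositive) (ha : ∀ i, 0 ≤ a i) (u : H) (w : ι → H) :
    ⟪B u, u⟫ ≤ energy B A a u w :=
  le_add_of_nonneg_right <| Finset.sum_nonneg fun i _ =>
    mul_nonneg (ha i) (hA.inner_nonneg_left _)

theorem energy_nonneg (hB : B.IsPositive) (hA : A.IsPositive) (ha : ∀ i, 0 ≤ a i) (u : H)
    (w : ι → H) : 0 ≤ energy B A a u w :=
  (hB.inner_nonneg_left u).trans (inner_le_energy hA ha u w)

theorem hasDerivAt_energy [FiniteDimensional ℝ H] (hB : B.IsSymmetric) (hA : A.IsSymmetric)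
    {u : ℝ → H} {w : ι → ℝ → H} {u' : H} {w' : ι → H} {t : ℝ} (hu : HasDerivAt u u' t)
    (hw : ∀ i, HasDerivAt (w i) (w' i) t) :
    HasDerivAt (fun s => energy B A a (u s) (fun i => w i s))
      (2 * (⟪B (u t), u'⟫ + ∑ i, a i * ⟪A (w i t), w' i⟫)) t := by
  refine ((hB.hasDerivAt_inner_apply_self hu).add (HasDerivAt.fun_sum fun i _ =>
    (hA.hasDerivAt_inner_apply_self (hw i)).const_mul (a i))).congr_deriv ?_
  rw [mul_add, Finset.mul_sum]
  congr 1
  exact Finset.sum_congr rfl fun i _ => by ring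

theorem energy_rate_le_inner (hA : ∀ x, 0 ≤ ⟪A x, x⟫) (hB : B.IsSymmetric)
    (hC : ∀ x, 0 ≤ ⟪C x, x⟫) (ha : ∀ i, 0 ≤ a i) (hb : ∀ i, 0 ≤ b i) {u u' f : H} {w : ι → H}
    (h : B u' + ∑ i, a i • A (w i) + C u = f) :
    ⟪B u, u'⟫ + ∑ i, a i * ⟪A (w i), u - b i • w i⟫ ≤ ⟪f, u⟫ := by
  have hBu : ⟪B u, u'⟫ = ⟪f, u⟫ - ∑ i, a i * ⟪A (w i), u⟫ - ⟪C u, u⟫ := by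
    rw [hB, real_inner_comm, ← h]
    simp only [inner_add_left, sum_inner, real_inner_smul_left]
    ring
  have hcoupling : ∑ i, a i * ⟪A (w i), u - b i • w i⟫
      = ∑ i, a i * ⟪A (w i), u⟫ - ∑ i, a i * (b i * ⟪A (w i), w i⟫) := by
    simp only [inner_sub_right, real_inner_smul_right, mul_sub, Finset.sum_sub_distrib]
  have hdamping : 0 ≤ ∑ i, a i * (b i * ⟪A (w i), w i⟫) :=
    Finset.sum_nonneg fun i _ => mul_nonneg (ha i) (mul_nonneg (hb i) (hA _))
  linarith [hC u]

theorem energy_rate_le (hA : A.IsPositive) (hB : B.IsPositive) {Binv : H →ₗ[ℝ] H}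
    (hBinv : ∀ x, B (Binv x) = x) (hC : ∀ x, 0 ≤ ⟪C x, x⟫) (ha : ∀ i, 0 ≤ a i)
    (hb : ∀ i, 0 ≤ b i) {u u' f : H} {w : ι → H} (h : B u' + ∑ i, a i • A (w i) + C u = f) :
    2 * (⟪B u, u'⟫ + ∑ i, a i * ⟪A (w i), u - b i • w i⟫)
      ≤ 2 * √⟪Binv f, f⟫ * √(energy B A a u w) :=
  calc _ ≤ 2 * ⟪f, u⟫ := by
        gcongr; exact energy_rate_le_inner hA.inner_nonneg_left hB.isSymmetric hC ha hb h
    _ ≤ 2 * (√⟪Binv f, f⟫ * √⟪B u, u⟫) := by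
        gcongr; exact inner_le_sqrt_inner_inv_mul_sqrt hB hBinv f u
    _ ≤ 2 * √⟪Binv f, f⟫ * √(energy B A a u w) := by
        rw [← mul_assoc]; gcongr; exact inner_le_energy hA ha u w

end Energy

end InnerProduct

theorem stmt_18_general {H : Type*} [NormedAddCommGroup H] [InnerProductSpace ℝ H]
    [FiniteDimensional ℝ H]
    (m : ℕ) (A B Binv C : H →ₗ[ℝ] H) (δ : ℝ) (hδ : 0 < δ)
    (hB_sym : ∀ x y : H, ⟪B x, y⟫ = ⟪x, B y⟫)
    (hB_pos : ∀ x : H, δ * ‖x‖ ^ 2 ≤ ⟪B x, x⟫)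
    (hBinv : ∀ x : H, Binv (B x) = x ∧ B (Binv x) = x)
    (hC_nonneg : ∀ x : H, 0 ≤ ⟪C x, x⟫)
    (hA_sym : ∀ x y : H, ⟪A x, y⟫ = ⟪x, A y⟫)
    (hA_nonneg : ∀ x : H, 0 ≤ ⟪A x, x⟫)
    (a b : Fin m → ℝ) (ha : ∀ i, 0 < a i) (hb : ∀ i, 0 ≤ b i)
    (v v' : ℝ → H) (vi : Fin m → ℝ → H) (φ : ℝ → H) (u₀ : H)
    (hφ : Continuous φ)
    (hv_deriv : ∀ t, 0 ≤ t → HasDerivAt v (v' t) t)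
    (heq : ∀ t, 0 ≤ t →
      B (v' t) + ∑ i, a i • A (vi i t) + C (v t) = φ t)
    (hvi : ∀ i, ∀ t, 0 ≤ t → HasDerivAt (vi i) (v t - b i • vi i t) t)
    (hv0 : v 0 = u₀) (hvi0 : ∀ i, vi i 0 = 0) :
    ∀ t, 0 ≤ t →
      Real.sqrt (⟪B (v t), v t⟫ + ∑ i, a i * ⟪A (vi i t), vi i t⟫)
        ≤ Real.sqrt ⟪B u₀, u₀⟫
          + ∫ s in (0 : ℝ)..t, Real.sqrt ⟪Binv (φ s), φ s⟫ := by
  intro t ht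
  have hB : B.IsPositive :=
    B.isPositive_iff.2 ⟨hB_sym, fun x => (mul_nonneg hδ.le (sq_nonneg ‖x‖)).trans (hB_pos x)⟩
  have hA : A.IsPositive := A.isPositive_iff.2 ⟨hA_sym, hA_nonneg⟩
  have ha₀ : ∀ i, 0 ≤ a i := fun i => (ha i).le
  have hψ : Continuous fun s => √⟪Binv (φ s), φ s⟫ :=
    ((Binv.continuous_of_finiteDimensional.comp hφ).inner hφ).sqrt
  have hbound := sqrt_le_sqrt_add_integral_of_deriv_le
    (E := fun s => energy B A a (v s) (vi · s)) hψ
    (fun _ => Real.sqrt_nonneg _) (fun s _ => energy_nonneg hB hA ha₀ _ _)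
    (fun s hs => hasDerivAt_energy hB.isSymmetric hA.isSymmetric (hv_deriv s hs) (hvi · s hs))
    (fun s hs => energy_rate_le hA hB (fun x => (hBinv x).2) hC_nonneg ha₀ hb (heq s hs)) ht
  simpa [energy, hv0, hvi0] using hbound

theorem stmt_18 {H : Type*} [NormedAddCommGroup H] [InnerProductSpace ℝ H]
    [FiniteDimensional ℝ H]
    (m : ℕ) (hm : 1 ≤ m) (A B Binv C : H →ₗ[ℝ] H) (δ : ℝ) (hδ : 0 < δ)
    (hB_sym : ∀ x y : H, ⟪B x, y⟫ = ⟪x, B y⟫)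
    (hB_pos : ∀ x : H, δ * ‖x‖ ^ 2 ≤ ⟪B x, x⟫)
    (hBinv : ∀ x : H, Binv (B x) = x ∧ B (Binv x) = x)
    (hC_nonneg : ∀ x : H, 0 ≤ ⟪C x, x⟫)
    (hA_sym : ∀ x y : H, ⟪A x, y⟫ = ⟪x, A y⟫)
    (hA_nonneg : ∀ x : H, 0 ≤ ⟪A x, x⟫)
    (a b : Fin m → ℝ) (ha : ∀ i, 0 < a i) (hb : ∀ i, 0 ≤ b i)
    (v v' : ℝ → H) (vi : Fin m → ℝ → H) (φ : ℝ → H) (u₀ : H)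
    (hφ : Continuous φ) (hv'_cont : Continuous v')
    (hv_deriv : ∀ t, 0 ≤ t → HasDerivAt v (v' t) t)
    (heq : ∀ t, 0 ≤ t →
      B (v' t) + ∑ i, a i • A (vi i t) + C (v t) = φ t)
    (hvi : ∀ i, ∀ t, 0 ≤ t → HasDerivAt (vi i) (v t - b i • vi i t) t)
    (hv0 : v 0 = u₀) (hvi0 : ∀ i, vi i 0 = 0) :
    ∀ t, 0 ≤ t →
      Real.sqrt (⟪B (v t), v t⟫ + ∑ i, a i * ⟪A (vi i t), vi i t⟫)
        ≤ Real.sqrt ⟪B u₀, u₀⟫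
          + ∫ s in (0 : ℝ)..t, Real.sqrt ⟪Binv (φ s), φ s⟫ :=
  stmt_18_general m A B Binv C δ hδ hB_sym hB_pos hBinv hC_nonneg hA_sym hA_nonneg a b ha hb v v' vi
    φ u₀ hφ hv_deriv heq hvi hv0 hvi0
end
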